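/- arXiv:1809.00274 — 2 statements merged into one kernel-verified Lean document; each statement's English description precedes it below -/
import Mathlib

section
/- The 9-tuple (1,1,1,1,1,1,1,1,1) is a λ-quiddity cycle over ℤ for some λ ∈ {±1}, the 8-tuple (0,1,1,1,1,1,1,0) is a quiddity cycle over ℕ (the nonnegative integers), and (1,1,1,1,1,1,1,1,1) = (1,1,1) ⊕ (0,1,1,1,1,1,1,0). In particular, (1,1,1,1,1,1,1,1,1) is reducible over ℕ, although by the irreducibility of all-ones cycles it is irreducible over ℕ_{>0}; hence reducibility of a quiddity cycle depends on the ambient set R. -/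
open Matrix

/-- The 2×2 matrix `[[x, -1], [1, 0]]` associated to an entry of a quiddity cycle. -/
def qMat {R : Type*} [CommRing R] (x : R) : Matrix (Fin 2) (Fin 2) R := !![x, -1; 1, 0]

/-- `c` is a `lam`-quiddity cycle: the product `∏ [[cₜ,−1],[1,0]]` equals `lam • Id`. -/
def IsQC {R : Type*} [CommRing R] (lam : R) (c : List R) : Prop :=
  (c.map qMat).prod = lam • (1 : Matrix (Fin 2) (Fin 2) R)

/-- `a ⊕ b = (a₁+b_l, a₂, …, a_{k−1}, a_k+b₁, b₂, …, b_{l−1})`. -/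
def oplus {R : Type*} [CommRing R] (a b : List R) : List R :=
  (a.head?.getD 0 + b.getLast?.getD 0) ::
    ((a.drop 1).dropLast ++ (a.getLast?.getD 0 + b.head?.getD 0) :: (b.drop 1).dropLast)

/-- Dihedral equivalence: `a` is a cyclic rotation of `b` or of the reversal of `b`,
i.e. `a = b^σ` for some `σ` in the dihedral group acting on `n` points. -/
def DihEquiv {α : Type*} (a b : List α) : Prop :=
  ∃ i : ℕ, a = b.rotate i ∨ a = b.reverse.rotate i

/-- The action of a dihedral group element, encoded by a rotation amount and a reversal flag. -/
def applyDih {α : Type*} (p : ℕ × Bool) (c : List α) : List α :=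
  if p.2 then c.reverse.rotate p.1 else c.rotate p.1

/-- `c` (of length `> 2`) is reducible over the subset `S ⊆ ℤ` as a `lam`-quiddity cycle. -/
def ReducibleOn (S : Set ℤ) (lam : ℤ) (c : List ℤ) : Prop :=
  ∃ (lam' lam'' : ℤ) (a b : List ℤ),
    (lam' = 1 ∨ lam' = -1) ∧ (lam'' = 1 ∨ lam'' = -1) ∧
    (∀ x ∈ a, x ∈ S) ∧ (∀ x ∈ b, x ∈ S) ∧
    IsQC lam' a ∧ IsQC lam'' b ∧
    2 < a.length ∧ 2 < b.length ∧ c.length = a.length + b.length - 2 ∧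
    lam = -(lam' * lam'') ∧ DihEquiv c (oplus a b)

/-!
Since `[[1,-1],[1,0]]³ = -1` and `[[0,-1],[1,0]]² = -1`, the all-ones tuples of length `3k` are
quiddity cycles, and so is `(0,1,1,1,1,1,1,0)`, which has nonnegative entries; glueing it to
`(1,1,1)` gives the all-ones 9-tuple. Over the positive integers no splitting exists: the first
entry `a₁ + b_l` of `a ⊕ b` is at least `2`, while every rotation or reflection of an all-ones
tuple has only entries `1`.
-/

section QuiddityMatrices

variable {R : Type*} [CommRing R]

theorem qMat_zero_sq : qMat (0 : R) ^ 2 = -1 := by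
  ext i j; fin_cases i <;> fin_cases j <;> simp [qMat, sq]

theorem qMat_one_pow_three : qMat (1 : R) ^ 3 = -1 := by
  ext i j; fin_cases i <;> fin_cases j <;> simp [qMat, pow_succ]

theorem isQC_replicate_one (k : ℕ) : IsQC ((-1 : R) ^ k) (List.replicate (3 * k) 1) := by
  rw [IsQC, List.map_replicate, List.prod_replicate, pow_mul, qMat_one_pow_three,
    ← neg_one_smul R (1 : Matrix (Fin 2) (Fin 2) R), smul_pow, one_pow]

theorem IsQC.zero_cons_append_zero {lam : R} {c : List R} (h : IsQC lam c) :
    IsQC (-lam) (0 :: c ++ [0]) := by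
  have hc : (c.map qMat).prod = lam • 1 := h
  simp [IsQC, hc, ← sq, qMat_zero_sq]

end QuiddityMatrices

theorem DihEquiv.mem_iff {α : Type*} {a b : List α} (h : DihEquiv a b) {x : α} :
    x ∈ a ↔ x ∈ b := by
  obtain ⟨i, rfl | rfl⟩ := h <;> simp

theorem head_add_getLast_mem_oplus {R : Type*} [CommRing R] {a b : List R} (ha : a ≠ [])
    (hb : b ≠ []) : a.head ha + b.getLast hb ∈ oplus a b := by
  simp [oplus, List.head?_eq_some_head ha, List.getLast?_eq_some_getLast hb]

theorem not_reducibleOn_pos_of_forall_le_one {lam : ℤ} {c : List ℤ} (hc : ∀ x ∈ c, x ≤ 1) :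
    ¬ ReducibleOn {x | 0 < x} lam c := by
  rintro ⟨-, -, a, b, -, -, ha, hb, -, -, hla, hlb, -, -, hc_ab⟩
  have ha₀ : a ≠ [] := List.ne_nil_of_length_pos (by omega)
  have hb₀ : b ≠ [] := List.ne_nil_of_length_pos (by omega)
  have h_sum : a.head ha₀ + b.getLast hb₀ ≤ 1 :=
    hc _ (hc_ab.mem_iff.2 (head_add_getLast_mem_oplus ha₀ hb₀))
  have h_head : 0 < a.head ha₀ := ha _ (List.head_mem ha₀)
  have h_last : 0 < b.getLast hb₀ := hb _ (List.getLast_mem hb₀)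
  omega

/-- `(1,1,1,1,1,1,1,1,1)` is a `λ`-quiddity cycle over ℤ for some `λ ∈ {±1}`,
`(0,1,1,1,1,1,1,0)` is a quiddity cycle over ℕ, and
`(1,1,1,1,1,1,1,1,1) = (1,1,1) ⊕ (0,1,1,1,1,1,1,0)`; hence the all-ones 9-tuple is
reducible over ℕ, though irreducible over `ℕ_{>0}`: reducibility depends on `R`. -/
theorem stmt11 :
    ∃ lam : ℤ, (lam = 1 ∨ lam = -1) ∧
      IsQC lam ([1, 1, 1, 1, 1, 1, 1, 1, 1] : List ℤ) ∧
      (∃ mu : ℤ, (mu = 1 ∨ mu = -1) ∧ IsQC mu ([0, 1, 1, 1, 1, 1, 1, 0] : List ℤ) ∧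
        (∀ x ∈ ([0, 1, 1, 1, 1, 1, 1, 0] : List ℤ), 0 ≤ x)) ∧
      ([1, 1, 1, 1, 1, 1, 1, 1, 1] : List ℤ) = oplus [1, 1, 1] [0, 1, 1, 1, 1, 1, 1, 0] ∧
      ReducibleOn {x : ℤ | 0 ≤ x} lam [1, 1, 1, 1, 1, 1, 1, 1, 1] ∧
      ¬ ReducibleOn {x : ℤ | 0 < x} lam [1, 1, 1, 1, 1, 1, 1, 1, 1] := by
  have h9 : IsQC (-1) ([1, 1, 1, 1, 1, 1, 1, 1, 1] : List ℤ) := isQC_replicate_one 3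
  have h3 : IsQC (-1) ([1, 1, 1] : List ℤ) := isQC_replicate_one 1
  have h8 : IsQC (-1) ([0, 1, 1, 1, 1, 1, 1, 0] : List ℤ) := by
    simpa using (isQC_replicate_one (R := ℤ) 2).zero_cons_append_zero
  have hsum : ([1, 1, 1, 1, 1, 1, 1, 1, 1] : List ℤ) =
      oplus [1, 1, 1] [0, 1, 1, 1, 1, 1, 1, 0] := by decide
  refine ⟨-1, Or.inr rfl, h9, ⟨-1, Or.inr rfl, h8, by decide⟩, hsum, ?_,
    not_reducibleOn_pos_of_forall_le_one (by decide)⟩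
  exact ⟨-1, -1, _, _, Or.inr rfl, Or.inr rfl, by decide, by decide, h3, h8, by decide, by decide,
    rfl, by norm_num, 0, Or.inl (hsum.trans (List.rotate_zero _).symm)⟩
end

section
/- Let R be a subset of a commutative ring, let c = (c₁,…,cₙ) ∈ Rⁿ be a λ-quiddity cycle and let σ ∈ Dₙ be an element of the dihedral group acting on n points. Then c^σ = (c_{σ(1)},…,c_{σ(n)}) is again a λ-quiddity cycle; in particular every cyclic rotation of c and the reversed tuple (cₙ,…,c₁) are λ-quiddity cycles. -/
open Matrix

section Aux
variable {R : Type*} [CommRing R]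
variable {R : Type*} [CommRing R]

def qInv (x : R) : Matrix (Fin 2) (Fin 2) R := !![0, 1; -1, x]

lemma qInv_mul (x : R) : qInv x * qMat x = 1 := by
  simp [qInv, qMat, Matrix.mul_fin_two, Matrix.one_fin_two]

lemma qMat_mul_inv (x : R) : qMat x * qInv x = 1 := by
  simp [qInv, qMat, Matrix.mul_fin_two, Matrix.one_fin_two]

lemma rot1 (lam : R) (x : R) (t : List R) (h : IsQC lam (x :: t)) :
    IsQC lam (t ++ [x]) := by
  unfold IsQC at *
  simp only [List.map_cons, List.prod_cons, List.map_append, List.prod_append,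
    List.map_nil, List.prod_nil, List.map, List.prod_cons, mul_one] at *
  have : (t.map qMat).prod * qMat x
      = qInv x * (qMat x * (t.map qMat).prod) * qMat x := by
    rw [← mul_assoc, qInv_mul, one_mul]
  rw [this, h]
  simp [mul_smul_comm, smul_mul_assoc, qInv_mul]

lemma rot (lam : R) (c : List R) (hc : IsQC lam c) (i : ℕ) : IsQC lam (c.rotate i) := by
  induction i with
  | zero => simpa using hc
  | succ n ih =>
    have : c.rotate (n + 1) = (c.rotate n).rotate 1 := by rw [List.rotate_rotate]
    rw [this]
    cases hcr : c.rotate n with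
    | nil => rw [hcr] at ih; simpa using ih
    | cons x t =>
      rw [hcr] at ih
      have : (x :: t).rotate 1 = t ++ [x] := by
        simpa using List.rotate_cons_succ t x 0
      rw [this]
      exact rot1 lam x t ih

def Kmat : Matrix (Fin 2) (Fin 2) R := !![0, 1; 1, 0]

lemma KK : (Kmat : Matrix (Fin 2) (Fin 2) R) * Kmat = 1 := by
  simp [Kmat, Matrix.mul_fin_two, Matrix.one_fin_two]

lemma MKM (x : R) : qMat x * Kmat * qMat x = Kmat := by
  simp [Kmat, qMat, Matrix.mul_fin_two]

lemma rev_key (l : List R) :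
    (l.reverse.map qMat).prod * Kmat * (l.map qMat).prod = Kmat := by
  induction l with
  | nil => simp [KK]
  | cons x t ih =>
    simp only [List.reverse_cons, List.map_append, List.prod_append, List.map_cons,
      List.prod_cons, List.map_nil, List.prod_nil, mul_one]
    calc (t.reverse.map qMat).prod * qMat x * Kmat * (qMat x * (t.map qMat).prod)
        = (t.reverse.map qMat).prod * (qMat x * Kmat * qMat x) * (t.map qMat).prod := by
          simp only [mul_assoc]
      _ = (t.reverse.map qMat).prod * Kmat * (t.map qMat).prod := by rw [MKM]
      _ = Kmat := ih

lemma rev (lam : R) (h : lam = 1 ∨ lam = -1) (c : List R) (hc : IsQC lam c) :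
    IsQC lam c.reverse := by
  have hl2 : lam * lam = 1 := by rcases h with h | h <;> simp [h]
  have key := rev_key c
  rw [hc] at key
  unfold IsQC
  rw [mul_smul_comm, mul_one] at key
  have h2 : (c.reverse.map qMat).prod * Kmat = lam • (Kmat : Matrix (Fin 2) (Fin 2) R) := by
    have := congrArg (fun M => lam • M) key
    simpa [smul_smul, hl2] using this
  calc (c.reverse.map qMat).prod
      = (c.reverse.map qMat).prod * Kmat * Kmat := by rw [mul_assoc, KK, mul_one]
    _ = lam • ((Kmat : Matrix (Fin 2) (Fin 2) R) * Kmat) := by rw [h2, smul_mul_assoc]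
    _ = lam • 1 := by rw [KK]

end Aux

/-- If `c` is a `λ`-quiddity cycle then so is `c^σ` for every dihedral element `σ`;
in particular every cyclic rotation of `c` and the reversed tuple are `λ`-quiddity cycles. -/
theorem stmt15 {R : Type*} [CommRing R] (lam : R) (h : lam = 1 ∨ lam = -1)
    (c : List R) (hc : IsQC lam c) :
    (∀ σ : ℕ × Bool, IsQC lam (applyDih σ c)) ∧
    (∀ i : ℕ, IsQC lam (c.rotate i)) ∧ IsQC lam c.reverse := by
  refine ⟨fun σ => ?_, fun i => rot lam c hc i, rev lam h c hc⟩
  rcases σ with ⟨i, b⟩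
  cases b with
  | false => simpa [applyDih] using rot lam c hc i
  | true => simpa [applyDih] using rot lam c.reverse (rev lam h c hc) i
end
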